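/- If (N : M) = p_1 for a prime ideal p_1 of R, then (⟨E_M(N)⟩ : M) = p_1. -/

import Mathlib

/-!
Elements of `M` killed into `N` by some element outside `p₁` form a submodule, the saturation
of `N` at `p₁`, and it contains every `r • m` of the envelope: if `r ∈ p₁` then `r • m ∈ N`
already, and otherwise `r ^ t ∉ p₁` kills `r • m` into `N`. Since `M` is finitely generated,
some single `c ∉ p₁` kills `s • M` into `N` whenever `s • M` lies in the saturation, so
`c * s ∈ (N : M) = p₁` and hence `s ∈ p₁`.
-/

namespace Submodule

variable {R M : Type*} [CommSemiring R] [AddCommMonoid M] [Module R M]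

/-- The saturation of `N` with respect to a multiplicative set `S`: the kernel of
`M → S⁻¹M / S⁻¹N`. -/
def saturation (N : Submodule R M) (S : Submonoid R) : Submodule R M where
  carrier := {m | ∃ c ∈ S, c • m ∈ N}
  zero_mem' := ⟨1, S.one_mem, by simp⟩
  add_mem' := by
    rintro a b ⟨c, hc, hca⟩ ⟨d, hd, hdb⟩
    refine ⟨d * c, S.mul_mem hd hc, ?_⟩
    rw [smul_add, mul_smul, mul_comm, mul_smul]
    exact N.add_mem (N.smul_mem d hca) (N.smul_mem c hdb)
  smul_mem' := by
    rintro r a ⟨c, hc, hca⟩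
    exact ⟨c, hc, by rw [smul_comm]; exact N.smul_mem r hca⟩

variable {N : Submodule R M} {S : Submonoid R}

theorem le_saturation : N ≤ N.saturation S :=
  fun m hm ↦ ⟨1, S.one_mem, by simpa using hm⟩

theorem exists_mem_colon_of_fg_le_saturation {L : Submodule R M} (hL : L.FG)
    (h : L ≤ N.saturation S) : ∃ c ∈ S, c ∈ N.colon L := by
  induction L, hL using fg_induction with
  | singleton x =>
    obtain ⟨c, hc, hcx⟩ := h (mem_span_singleton_self x)
    exact ⟨c, hc, mem_colon_span_singleton.mpr hcx⟩
  | sup L₁ L₂ _ _ ih₁ ih₂ =>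
    obtain ⟨c₁, hc₁, h₁⟩ := ih₁ (le_sup_left.trans h)
    obtain ⟨c₂, hc₂, h₂⟩ := ih₂ (le_sup_right.trans h)
    refine ⟨c₁ * c₂, S.mul_mem hc₁ hc₂, ?_⟩
    rw [← span_eq L₂, sup_span, colon_span, mem_colon]
    rintro x (hx | hx)
    · exact mem_colon.mp ((N.colon L₁).mul_mem_right c₂ h₁) x hx
    · exact mem_colon.mp ((N.colon L₂).mul_mem_left c₁ h₂) x hx

theorem exists_mul_mem_colon_of_mem_colon_saturation [Module.Finite R M] {s : R}
    (hs : s ∈ (N.saturation S).colon ⊤) : ∃ c ∈ S, c * s ∈ N.colon ⊤ := by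
  have hsM : (⊤ : Submodule R M).map (s • LinearMap.id) ≤ N.saturation S := by
    rintro _ ⟨m, -, rfl⟩
    exact mem_colon.mp hs m trivial
  obtain ⟨c, hc, hcs⟩ := exists_mem_colon_of_fg_le_saturation (Module.Finite.fg_top.map _) hsM
  refine ⟨c, hc, mem_colon.mpr fun m _ ↦ ?_⟩
  rw [mul_smul]
  exact mem_colon.mp hcs (s • m) ⟨m, trivial, rfl⟩

theorem colon_saturation_primeCompl_le [Module.Finite R M] {p : Ideal R} [p.IsPrime]
    (h : N.colon ⊤ ≤ p) : (N.saturation p.primeCompl).colon ⊤ ≤ p := by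
  intro s hs
  obtain ⟨c, hc, hcs⟩ := exists_mul_mem_colon_of_mem_colon_saturation hs
  exact (Ideal.IsPrime.mem_or_mem ‹_› (h hcs)).resolve_left hc

/-- The envelope `E_M(N)`. -/
def envelope (N : Submodule R M) : Set M :=
  {x | ∃ (r : R) (m : M) (t : ℕ), 0 < t ∧ r ^ t • m ∈ N ∧ x = r • m}

theorem subset_envelope : (N : Set M) ⊆ N.envelope :=
  fun m hm ↦ ⟨1, m, 1, one_pos, by simpa using hm, (one_smul R m).symm⟩

theorem envelope_subset_saturation_primeCompl {p : Ideal R} [p.IsPrime]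
    (h : p ≤ N.colon ⊤) : N.envelope ⊆ N.saturation p.primeCompl := by
  rintro _ ⟨r, m, t, ht, hrt, rfl⟩
  by_cases hr : r ∈ p
  · exact le_saturation (mem_colon.mp (h hr) m trivial)
  · refine ⟨r ^ t, fun hrt ↦ hr (Ideal.IsPrime.mem_of_pow_mem ‹_› t hrt), ?_⟩
    rw [smul_comm]
    exact N.smul_mem r hrt

end Submodule

theorem colon_envelope_of_colon_prime_general
    {R M : Type*} [CommRing R]
    [AddCommGroup M] [Module R M] [Module.Finite R M]
    (N : Submodule R M)
    (p₁ : Ideal R) (hp₁ : p₁.IsPrime)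
    (hcolon : N.colon ⊤ = p₁) :
    (Submodule.span R {x : M | ∃ (r : R) (m : M) (t : ℕ),
        0 < t ∧ r ^ t • m ∈ N ∧ x = r • m}).colon ⊤ = p₁ := by
  change (Submodule.span R N.envelope).colon ⊤ = p₁
  have h_span_le : Submodule.span R N.envelope ≤ N.saturation p₁.primeCompl :=
    Submodule.span_le.mpr (Submodule.envelope_subset_saturation_primeCompl hcolon.ge)
  refine le_antisymm ?_ ?_
  · exact (Submodule.colon_mono h_span_le subset_rfl).trans
      (Submodule.colon_saturation_primeCompl_le hcolon.le)
  · exact hcolon ▸ Submodule.colon_mono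
      (Submodule.subset_envelope.trans Submodule.subset_span) subset_rfl

/-- If `(N : M) = p₁` for a prime ideal `p₁` of `R`, then
`(⟨E_M(N)⟩ : M) = p₁`. -/
theorem colon_envelope_of_colon_prime
    {R M : Type*} [CommRing R] [IsNoetherianRing R]
    [AddCommGroup M] [Module R M] [Module.Finite R M]
    (N : Submodule R M) (hN : N ≠ ⊤)
    (p₁ : Ideal R) (hp₁ : p₁.IsPrime)
    (hcolon : N.colon ⊤ = p₁) :
    (Submodule.span R {x : M | ∃ (r : R) (m : M) (t : ℕ),
        0 < t ∧ r ^ t • m ∈ N ∧ x = r • m}).colon ⊤ = p₁ :=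
  colon_envelope_of_colon_prime_general N p₁ hp₁ hcolon
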